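/- Let f, g be real analytic on 𝕋 with f and v = g/f nonconstant and Z(f) = {x ∈ 𝕋 : f(x) = 0} ≠ ∅. Then there is a constant c = c(f,g) > 0 such that mes{x ∈ 𝕋 : |g(x) − E·f(x)|/√(1+E²) < ε} < ε^{c} for all E ∈ ℝ and all sufficiently small ε > 0 (uniformly in E). -/

import Mathlib

/-!
For `θ = arctan E`, the function `h_θ = cos θ · g - sin θ · f` equals `(g - E f)/√(1+E²)`.
Since `g/f` is nonconstant, no `h_θ` vanishes identically, so by analyticity some derivative
`h_θ^(k)` is nonzero at each point. By compactness of `[-π/2, π/2] × [0, 1]`, finitely many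
neighbourhoods carry lower bounds `δ ≤ |h_θ^(k)|` with `k < N`, uniformly in `θ`. On an interval
where `|h^(k)| ≥ δ` the sublevel set `{|h| < ε}` has measure at most `3^k (ε/δ)^(1/k)`: by induction
on `k`, split the interval at the levels `±λ` of the monotone function `h^(k-1)`. Summing over the
cover gives `mes ≤ C ε^(1/N) < ε^(1/(2N))` for small `ε`.
-/

open MeasureTheory Set Filter Topology Real
open scoped ContDiff

lemma Set.OrdConnected.sep_mem_of_monotoneOn_or_antitoneOn {α β : Type*} [LinearOrder α]
    [LinearOrder β] {s : Set α} {t : Set β} {g : α → β} (hs : s.OrdConnected)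
    (ht : t.OrdConnected) (hg : MonotoneOn g s ∨ AntitoneOn g s) :
    {x ∈ s | g x ∈ t}.OrdConnected := by
  refine ⟨fun x hx y hy z hz => ⟨hs.out hx.1 hy.1 hz, ht.uIcc_subset hx.2 hy.2 ?_⟩⟩
  have hzs := hs.out hx.1 hy.1 hz
  rcases hg with hg | hg
  · exact mem_uIcc_of_le (hg hx.1 hzs hz.1) (hg hzs hy.1 hz.2)
  · exact mem_uIcc_of_ge (hg hzs hy.1 hz.2) (hg hx.1 hzs hz.1)

section Sublevel

variable {h : ℝ → ℝ} {s : Set ℝ} {δ ε : ℝ}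

lemma mul_abs_sub_le_abs_sub_of_le_abs_deriv (hh : Differentiable ℝ h) (hs : s.OrdConnected)
    (hlow : ∀ x ∈ s, δ ≤ |deriv h x|) {x y : ℝ} (hx : x ∈ s) (hy : y ∈ s) :
    δ * |y - x| ≤ |h y - h x| := by
  wlog hxy : x < y generalizing x y
  · rcases (not_lt.1 hxy).eq_or_lt with rfl | hyx
    · simp
    · simpa only [abs_sub_comm] using this hy hx hyx
  obtain ⟨c, hc, hslope⟩ :=
    exists_deriv_eq_slope h hxy hh.continuous.continuousOn hh.differentiableOn
  have hyx : 0 < y - x := sub_pos.2 hxy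
  calc δ * |y - x| ≤ |deriv h c| * (y - x) := by
        rw [abs_of_pos hyx]
        exact mul_le_mul_of_nonneg_right (hlow c (hs.out hx hy (Ioo_subset_Icc_self hc))) hyx.le
    _ = |h y - h x| := by rw [hslope, abs_div, abs_of_pos hyx, div_mul_cancel₀ _ hyx.ne']

lemma volume_sep_abs_lt_le_of_le_abs_deriv (hh : Differentiable ℝ h) (hs : s.OrdConnected)
    (hδ : 0 < δ) (hlow : ∀ x ∈ s, δ ≤ |deriv h x|) (ε : ℝ) :
    volume {x ∈ s | |h x| < ε} ≤ ENNReal.ofReal (2 * ε / δ) := by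
  refine (Real.volume_le_diam _).trans (Metric.ediam_le fun x hx y hy => ?_)
  rw [edist_dist, Real.dist_eq]
  refine ENNReal.ofReal_le_ofReal ((le_div_iff₀ hδ).2 ?_)
  have hslope := mul_abs_sub_le_abs_sub_of_le_abs_deriv hh hs hlow hy.1 hx.1
  linarith [abs_sub (h x) (h y), hx.2, hy.2]

lemma monotoneOn_or_antitoneOn_of_deriv_ne_zero (hh : Differentiable ℝ h) (hs : s.OrdConnected)
    (hne : ∀ x ∈ s, deriv h x ≠ 0) : MonotoneOn h s ∨ AntitoneOn h s := by
  rcases hasDerivWithinAt_forall_lt_or_forall_gt_of_forall_ne hs.convex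
    (fun x _ => (hh x).hasDerivAt.hasDerivWithinAt) hne with hneg | hpos
  · exact .inr (strictAntiOn_of_deriv_neg hs.convex hh.continuous.continuousOn
      fun x hx => hneg x (interior_subset hx)).antitoneOn
  · exact .inl (strictMonoOn_of_deriv_pos hs.convex hh.continuous.continuousOn
      fun x hx => hpos x (interior_subset hx)).monotoneOn

lemma volume_sep_abs_lt_le_add_of_le_abs_deriv {g : ℝ → ℝ} (hg : Differentiable ℝ g)
    (hs : s.OrdConnected) (hδ : 0 < δ) (hlow : ∀ x ∈ s, δ ≤ |deriv g x|) (lev : ℝ)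
    {B : ENNReal} (hB : ∀ u : Set ℝ, u.OrdConnected → (∀ x ∈ u, lev ≤ |g x|) →
      volume {x ∈ u | |h x| < ε} ≤ B) :
    volume {x ∈ s | |h x| < ε} ≤ ENNReal.ofReal (2 * lev / δ) + (B + B) := by
  have hmono := monotoneOn_or_antitoneOn_of_deriv_ne_zero hg hs
    fun x hx => abs_pos.1 (hδ.trans_le (hlow x hx))
  set U := {x ∈ s | g x ∈ Ici lev}
  set L := {x ∈ s | g x ∈ Iic (-lev)}
  have hcover : {x ∈ s | |h x| < ε} ⊆
      {x ∈ s | |g x| < lev} ∪ ({x ∈ U | |h x| < ε} ∪ {x ∈ L | |h x| < ε}) := by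
    rintro x ⟨hxs, hx⟩
    rcases lt_or_ge |g x| lev with hgx | hgx
    · exact .inl ⟨hxs, hgx⟩
    · rcases le_abs'.1 hgx with hneg | hpos
      · exact .inr (.inr ⟨⟨hxs, hneg⟩, hx⟩)
      · exact .inr (.inl ⟨⟨hxs, hpos⟩, hx⟩)
  calc volume {x ∈ s | |h x| < ε}
      ≤ volume {x ∈ s | |g x| < lev} +
          (volume {x ∈ U | |h x| < ε} + volume {x ∈ L | |h x| < ε}) :=
        (measure_mono hcover).trans
          ((measure_union_le _ _).trans (add_le_add le_rfl (measure_union_le _ _)))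
    _ ≤ ENNReal.ofReal (2 * lev / δ) + (B + B) := by
        gcongr
        · exact volume_sep_abs_lt_le_of_le_abs_deriv hg hs hδ hlow _
        · exact hB U (hs.sep_mem_of_monotoneOn_or_antitoneOn ordConnected_Ici hmono)
            fun x hx => hx.2.trans (le_abs_self _)
        · exact hB L (hs.sep_mem_of_monotoneOn_or_antitoneOn ordConnected_Iic hmono)
            fun x hx => (le_neg.1 hx.2).trans (neg_le_abs _)

theorem volume_sep_abs_lt_le_of_le_abs_iteratedDeriv {k : ℕ} (hk : 1 ≤ k) (hh : ContDiff ℝ k h)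
    (hs : s.OrdConnected) (hδ : 0 < δ) (hε : 0 < ε)
    (hlow : ∀ x ∈ s, δ ≤ |iteratedDeriv k h x|) :
    volume {x ∈ s | |h x| < ε} ≤ ENNReal.ofReal (3 ^ k * (ε / δ) ^ (1 / (k : ℝ))) := by
  induction k, hk using Nat.le_induction generalizing s δ with
  | base =>
    simp only [iteratedDeriv_one] at hlow
    refine (volume_sep_abs_lt_le_of_le_abs_deriv (hh.differentiable one_ne_zero) hs hδ hlow
      ε).trans (ENNReal.ofReal_le_ofReal ?_)
    have : 0 ≤ ε / δ := by positivity
    rw [Nat.cast_one, div_one, Real.rpow_one, mul_div_assoc]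
    linarith
  | succ k hk ih =>
    have hu : 0 < ε / δ := by positivity
    -- split at the level `δ t`, where `t` balances the two bounds: `(ε / (δ t)) ^ (1 / k) = t`
    set t := (ε / δ) ^ (1 / ((k : ℝ) + 1))
    have ht : 0 < t := by positivity
    have hεt : (ε / (δ * t)) ^ (1 / (k : ℝ)) = t := by
      have hquot : ε / δ / t = (ε / δ) ^ ((k : ℝ) / (k + 1)) := by
        rw [show (k : ℝ) / (k + 1) = 1 - 1 / (k + 1) by field_simp; ring, Real.rpow_sub hu,
          Real.rpow_one]
      rw [← div_div, hquot, ← Real.rpow_mul hu.le]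
      congr 1
      field_simp
    have hsplit := volume_sep_abs_lt_le_add_of_le_abs_deriv (h := h) (ε := ε)
      (hh.differentiable_iteratedDeriv k (by exact_mod_cast k.lt_succ_self)) hs hδ
      (by simpa only [iteratedDeriv_succ] using hlow) (δ * t) (B := ENNReal.ofReal (3 ^ k * t))
      fun u hu hlowu => hεt ▸ ih (hh.of_le (by exact_mod_cast k.le_succ)) hu (by positivity) hlowu
    refine hsplit.trans ?_
    rw [← ENNReal.ofReal_add, ← ENNReal.ofReal_add] <;> try positivity
    refine ENNReal.ofReal_le_ofReal ?_
    have h3k : (3 : ℝ) ≤ 3 ^ k := le_self_pow₀ (by norm_num) (by omega)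
    rw [mul_div_assoc, mul_div_cancel_left₀ _ hδ.ne', pow_succ]
    push_cast
    nlinarith

theorem volume_sep_abs_lt_le_of_le_abs_iteratedDeriv_of_le {k N : ℕ} (hkN : k ≤ N)
    (hh : ContDiff ℝ N h) (hs : s.OrdConnected) (hδ : 0 < δ) (hε : 0 < ε) (hεδ : ε ≤ δ)
    (hlow : ∀ x ∈ s, δ ≤ |iteratedDeriv k h x|) :
    volume {x ∈ s | |h x| < ε} ≤ ENNReal.ofReal (3 ^ N * (ε / δ) ^ (1 / (N : ℝ))) := by
  rcases Nat.eq_zero_or_pos k with rfl | hk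
  · have hempty : {x ∈ s | |h x| < ε} = ∅ := eq_empty_of_forall_notMem fun x hx => by
      have := hlow x hx.1
      rw [iteratedDeriv_zero] at this
      linarith [hx.2]
    simp [hempty]
  · refine (volume_sep_abs_lt_le_of_le_abs_iteratedDeriv hk (hh.of_le (by exact_mod_cast hkN))
      hs hδ hε hlow).trans (ENNReal.ofReal_le_ofReal ?_)
    have hu : ε / δ ≤ 1 := (div_le_one hδ).2 hεδ
    exact mul_le_mul (pow_le_pow_right₀ (by norm_num) hkN)
      (Real.rpow_le_rpow_of_exponent_ge (by positivity) hu
        (one_div_le_one_div_of_le (Nat.cast_pos.2 hk) (Nat.cast_le.2 hkN)))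
      (by positivity) (by positivity)

end Sublevel

lemma exists_mem_nhds_ball_le_abs {W X : Type*} [TopologicalSpace W] [PseudoMetricSpace X]
    {F : W × X → ℝ} {p : W × X} (hF : ContinuousAt F p) (hp : F p ≠ 0) :
    ∃ δ > 0, ∃ U ∈ 𝓝 p.1, ∃ r > 0, ∀ w ∈ U, ∀ y ∈ Metric.ball p.2 r, δ ≤ |F (w, y)| := by
  have hev : ∀ᶠ q in 𝓝 p.1 ×ˢ 𝓝 p.2, |F p| / 2 < |F q| := by
    rw [← nhds_prod_eq]
    exact hF.abs.eventually (lt_mem_nhds (half_lt_self (abs_pos.2 hp)))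
  obtain ⟨pa, hpa, pb, hpb, hprod⟩ := eventually_prod_iff.1 hev
  obtain ⟨r, hr, hball⟩ := Metric.eventually_nhds_iff_ball.1 hpb
  exact ⟨|F p| / 2, by positivity, {w | pa w}, hpa, r, hr,
    fun w hw y hy => (hprod hw (hball y hy)).le⟩

section CompactFamily

variable {W : Type*} [TopologicalSpace W] {K : Set W} {S : Set ℝ} {h : W → ℝ → ℝ}

theorem exists_volume_sep_abs_lt_le_mul_rpow (hK : IsCompact K) (hS : IsCompact S)
    (hh : ∀ w, ContDiff ℝ ∞ (h w))
    (hcont : ∀ k : ℕ, Continuous fun p : W × ℝ => iteratedDeriv k (h p.1) p.2)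
    (hne : ∀ w ∈ K, ∀ x ∈ S, ∃ k, iteratedDeriv k (h w) x ≠ 0) :
    ∃ a > (0 : ℝ), ∃ C : ℝ, ∀ᶠ ε in 𝓝[>] 0, ∀ w ∈ K,
      volume {x ∈ S | |h w x| < ε} ≤ ENNReal.ofReal (C * ε ^ a) := by
  have hloc : ∀ p ∈ K ×ˢ S, ∃ k : ℕ, ∃ δ > 0, ∃ U ∈ 𝓝 p.1, ∃ r > 0,
      ∀ w ∈ U, ∀ y ∈ Metric.ball p.2 r, δ ≤ |iteratedDeriv k (h w) y| := fun p hp =>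
    let ⟨k, hk⟩ := hne p.1 hp.1 p.2 hp.2
    ⟨k, exists_mem_nhds_ball_le_abs (hcont k).continuousAt hk⟩
  choose! k δ hδ U hU r hr hlow using hloc
  obtain ⟨t, htK, hcover⟩ := (hK.prod hS).elim_nhds_subcover
    (fun p => U p ×ˢ Metric.ball p.2 (r p))
    fun p hp => prod_mem_nhds (hU p hp) (Metric.ball_mem_nhds _ (hr p hp))
  obtain ⟨N, hkN, hN⟩ : ∃ N : ℕ, (∀ p ∈ t, k p ≤ N) ∧ 1 ≤ N :=
    ⟨t.sup k + 1, fun p hp => (Finset.le_sup hp).trans (Nat.le_succ _), by omega⟩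
  have hN0 : (0 : ℝ) < N := by exact_mod_cast hN
  refine ⟨1 / (N : ℝ), one_div_pos.2 hN0, ∑ p ∈ t, 3 ^ N / δ p ^ (1 / (N : ℝ)), ?_⟩
  have hsmall : ∀ᶠ ε in 𝓝[>] (0 : ℝ), ∀ p ∈ t, ε < δ p := (eventually_all_finset t).2
    fun p hp => eventually_nhdsWithin_of_eventually_nhds (eventually_lt_nhds (hδ p (htK p hp)))
  filter_upwards [hsmall, self_mem_nhdsWithin] with ε hεδ (hε : 0 < ε) w hw
  have hsub : {x ∈ S | |h w x| < ε} ⊆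
      ⋃ p ∈ t, {y ∈ Metric.ball p.2 (r p) | w ∈ U p ∧ |h w y| < ε} := by
    intro x hx
    obtain ⟨p, hp, hwU, hxball⟩ :=
      mem_iUnion₂.1 (hcover (show (w, x) ∈ K ×ˢ S from ⟨hw, hx.1⟩))
    exact mem_iUnion₂.2 ⟨p, hp, hxball, hwU, hx.2⟩
  have hpiece : ∀ p ∈ t, volume {y ∈ Metric.ball p.2 (r p) | w ∈ U p ∧ |h w y| < ε} ≤
      ENNReal.ofReal (3 ^ N / δ p ^ (1 / (N : ℝ)) * ε ^ (1 / (N : ℝ))) := by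
    intro p hp
    by_cases hwU : w ∈ U p
    · simp only [hwU, true_and]
      refine (volume_sep_abs_lt_le_of_le_abs_iteratedDeriv_of_le
        (hkN p hp) ((hh w).of_le (by exact_mod_cast le_top))
        (convex_ball _ _).ordConnected (hδ p (htK p hp)) hε (hεδ p hp).le
        fun y hy => hlow p (htK p hp) w hwU y hy).trans_eq ?_
      rw [Real.div_rpow hε.le (hδ p (htK p hp)).le]
      ring_nf
    · simp [hwU]
  calc volume {x ∈ S | |h w x| < ε}
      ≤ ∑ p ∈ t, volume {y ∈ Metric.ball p.2 (r p) | w ∈ U p ∧ |h w y| < ε} :=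
        (measure_mono hsub).trans (measure_biUnion_finset_le _ _)
    _ ≤ ∑ p ∈ t, ENNReal.ofReal (3 ^ N / δ p ^ (1 / (N : ℝ)) * ε ^ (1 / (N : ℝ))) :=
        Finset.sum_le_sum hpiece
    _ = _ := by
        rw [← ENNReal.ofReal_sum_of_nonneg fun p hp => by have := hδ p (htK p hp); positivity,
          Finset.sum_mul]

lemma eventually_mul_rpow_lt_rpow_half {a : ℝ} (ha : 0 < a) (C : ℝ) :
    ∀ᶠ ε in 𝓝[>] (0 : ℝ), C * ε ^ a < ε ^ (a / 2) := by
  have hlim : Tendsto (fun ε : ℝ => C * ε ^ (a / 2)) (𝓝[>] 0) (𝓝 0) := by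
    have := ((Real.continuousAt_rpow_const 0 (a / 2) (.inr (by positivity))).tendsto.const_mul
      C).mono_left (nhdsWithin_le_nhds (s := Ioi 0))
    simpa [Real.zero_rpow (by positivity : a / 2 ≠ 0)] using this
  filter_upwards [hlim.eventually (gt_mem_nhds one_pos), self_mem_nhdsWithin]
    with ε hCε (hε : 0 < ε)
  calc C * ε ^ a = C * ε ^ (a / 2) * ε ^ (a / 2) := by
        rw [mul_assoc, ← Real.rpow_add hε, add_halves]
    _ < 1 * ε ^ (a / 2) := mul_lt_mul_of_pos_right hCε (by positivity)
    _ = ε ^ (a / 2) := one_mul _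

theorem exists_volume_sep_abs_lt_lt_rpow (hK : IsCompact K) (hS : IsCompact S)
    (hh : ∀ w, ContDiff ℝ ∞ (h w))
    (hcont : ∀ k : ℕ, Continuous fun p : W × ℝ => iteratedDeriv k (h p.1) p.2)
    (hne : ∀ w ∈ K, ∀ x ∈ S, ∃ k, iteratedDeriv k (h w) x ≠ 0) :
    ∃ c > (0 : ℝ), ∀ᶠ ε in 𝓝[>] 0, ∀ w ∈ K,
      volume {x ∈ S | |h w x| < ε} < ENNReal.ofReal (ε ^ c) := by
  obtain ⟨a, ha, C, hC⟩ := exists_volume_sep_abs_lt_le_mul_rpow hK hS hh hcont hne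
  refine ⟨a / 2, half_pos ha, ?_⟩
  filter_upwards [hC, eventually_mul_rpow_lt_rpow_half ha C, self_mem_nhdsWithin]
    with ε hε hlt (hε0 : 0 < ε) w hw
  exact (hε w hw).trans_lt ((ENNReal.ofReal_lt_ofReal_iff (by positivity)).2 hlt)

end CompactFamily

theorem AnalyticOnNhd.exists_iteratedDeriv_ne_zero {𝕜 E : Type*} [NontriviallyNormedField 𝕜]
    [CharZero 𝕜] [NormedAddCommGroup E] [NormedSpace 𝕜 E] [CompleteSpace E] {f : 𝕜 → E}
    {U : Set 𝕜} (hf : AnalyticOnNhd 𝕜 f U) (hU : IsPreconnected U) {x y : 𝕜} (hx : x ∈ U)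
    (hy : y ∈ U) (hfy : f y ≠ 0) : ∃ k, iteratedDeriv k f x ≠ 0 := by
  by_contra! hzero
  have htop : analyticOrderAt f x = ⊤ := ENat.eq_top_iff_forall_ge.2 fun n =>
    (natCast_le_analyticOrderAt_iff_iteratedDeriv_eq_zero (hf x hx)).2 fun i _ => hzero i
  exact hfy (hf.eqOn_zero_of_preconnected_of_eventuallyEq_zero hU hx
    (analyticOrderAt_eq_top.1 htop) hy)

lemma iteratedDeriv_const_mul_sub_const_mul {𝕜 : Type*} [NontriviallyNormedField 𝕜] {k : ℕ}
    {f g : 𝕜 → 𝕜} {x : 𝕜} (hf : ContDiffAt 𝕜 k f x) (hg : ContDiffAt 𝕜 k g x) (a b : 𝕜) :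
    iteratedDeriv k (fun y => a * g y - b * f y) x =
      a * iteratedDeriv k g x - b * iteratedDeriv k f x := by
  rw [iteratedDeriv_fun_sub (contDiffAt_const.mul hg) (contDiffAt_const.mul hf),
    iteratedDeriv_const_mul _ hg, iteratedDeriv_const_mul _ hf]

lemma exists_mul_sub_mul_ne_zero {f g : ℝ → ℝ}
    (hv : ∃ x y : ℝ, f x ≠ 0 ∧ f y ≠ 0 ∧ g x / f x ≠ g y / f y) {a b : ℝ} (hab : a ≠ 0 ∨ b ≠ 0) :
    ∃ x, a * g x - b * f x ≠ 0 := by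
  obtain ⟨x, y, hx, hy, hxy⟩ := hv
  by_contra! hzero
  have hratio : ∀ z, f z ≠ 0 → a * (g z / f z) = b := fun z hz => by
    rw [mul_div_assoc', div_eq_iff hz]
    linarith [hzero z]
  have ha : a = 0 := by
    by_contra ha
    exact hxy (mul_left_cancel₀ ha ((hratio x hx).trans (hratio y hy).symm))
  exact hab.elim (· ha) fun hb => hb (by simpa [ha] using (hratio x hx).symm)

theorem exists_volume_cos_mul_sub_sin_mul_lt_rpow {f g : ℝ → ℝ}
    (hf : AnalyticOnNhd ℝ f univ) (hg : AnalyticOnNhd ℝ g univ)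
    (hv : ∃ x y : ℝ, f x ≠ 0 ∧ f y ≠ 0 ∧ g x / f x ≠ g y / f y) :
    ∃ c > (0 : ℝ), ∀ᶠ ε in 𝓝[>] 0, ∀ θ ∈ Icc (-(π / 2)) (π / 2),
      volume {x ∈ Icc (0 : ℝ) 1 | |cos θ * g x - sin θ * f x| < ε} < ENNReal.ofReal (ε ^ c) := by
  have hcomb : ∀ (k : ℕ) θ, iteratedDeriv k (fun y => cos θ * g y - sin θ * f y) =
      fun y => cos θ * iteratedDeriv k g y - sin θ * iteratedDeriv k f y := fun k θ =>
    funext fun y => iteratedDeriv_const_mul_sub_const_mul hf.contDiff.contDiffAt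
      hg.contDiff.contDiffAt _ _
  refine exists_volume_sep_abs_lt_lt_rpow isCompact_Icc isCompact_Icc
    (fun θ => (contDiff_const.mul hg.contDiff).sub (contDiff_const.mul hf.contDiff))
    (fun k => ?_) fun θ _ x _ => ?_
  · simp only [hcomb]
    have := hf.contDiff.continuous_iteratedDeriv k (n := ∞) (by exact_mod_cast le_top)
    have := hg.contDiff.continuous_iteratedDeriv k (n := ∞) (by exact_mod_cast le_top)
    fun_prop
  · have hcs : cos θ ≠ 0 ∨ sin θ ≠ 0 := by
      by_contra! h0
      simpa [h0.1, h0.2] using cos_sq_add_sin_sq θ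
    obtain ⟨y, hy⟩ := exists_mul_sub_mul_ne_zero hv hcs
    exact ((analyticOnNhd_const.mul hg).sub
      (analyticOnNhd_const.mul hf)).exists_iteratedDeriv_ne_zero isPreconnected_univ trivial
      trivial hy

theorem statement6_general (f g : ℝ → ℝ)
    (hfan : AnalyticOnNhd ℝ f Set.univ) (hgan : AnalyticOnNhd ℝ g Set.univ)
    (hvnc : ∃ x y : ℝ, f x ≠ 0 ∧ f y ≠ 0 ∧ g x / f x ≠ g y / f y) :
    ∃ c > (0 : ℝ), ∃ ε₁ > (0 : ℝ), ∀ E : ℝ, ∀ ε : ℝ, 0 < ε → ε < ε₁ →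
      volume {x ∈ Ico (0 : ℝ) 1 | |g x - E * f x| / Real.sqrt (1 + E ^ 2) < ε} <
        ENNReal.ofReal (ε ^ c) := by
  obtain ⟨c, hc, hev⟩ := exists_volume_cos_mul_sub_sin_mul_lt_rpow hfan hgan hvnc
  obtain ⟨ε₁, hε₁, hε⟩ := (nhdsGT_basis (0 : ℝ)).eventually_iff.1 hev
  refine ⟨c, hc, ε₁, hε₁, fun E ε hε0 hεε₁ => ?_⟩
  have heq : ∀ x, |g x - E * f x| / √(1 + E ^ 2) =
      |cos (arctan E) * g x - sin (arctan E) * f x| := fun x => by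
    rw [← abs_of_pos (by positivity : 0 < √(1 + E ^ 2)), ← abs_div, cos_arctan, sin_arctan]
    ring_nf
  calc volume {x ∈ Ico (0 : ℝ) 1 | |g x - E * f x| / √(1 + E ^ 2) < ε}
      ≤ volume {x ∈ Icc (0 : ℝ) 1 | |cos (arctan E) * g x - sin (arctan E) * f x| < ε} :=
        measure_mono fun x hx => ⟨Ico_subset_Icc_self hx.1, heq x ▸ hx.2⟩
    _ < ENNReal.ofReal (ε ^ c) := hε ⟨hε0, hεε₁⟩ _ (Ioo_subset_Icc_self (arctan_mem_Ioo E))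

/-- **Uniform (in `E`) Łojasiewicz inequality for the normalized function
`(g - E·f)/√(1+E²)`.**  Let `f, g` be real analytic on `𝕋 = ℝ/ℤ` (encoded as `1`-periodic real
analytic functions on `ℝ`) with `f` and `v = g/f` nonconstant and `Z(f) ≠ ∅`.  There is
`c = c(f,g) > 0` such that `mes {x ∈ 𝕋 : |g x - E·f x|/√(1+E²) < ε} < ε ^ c` for all `E ∈ ℝ`
and all sufficiently small `ε > 0`, uniformly in `E`. -/
theorem statement6 (f g : ℝ → ℝ)
    (hfper : Function.Periodic f 1) (hgper : Function.Periodic g 1)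
    (hfan : AnalyticOnNhd ℝ f Set.univ) (hgan : AnalyticOnNhd ℝ g Set.univ)
    (hfnc : ∃ x y : ℝ, f x ≠ f y)
    (hvnc : ∃ x y : ℝ, f x ≠ 0 ∧ f y ≠ 0 ∧ g x / f x ≠ g y / f y)
    (hZ : ∃ x : ℝ, f x = 0) :
    ∃ c > (0 : ℝ), ∃ ε₁ > (0 : ℝ), ∀ E : ℝ, ∀ ε : ℝ, 0 < ε → ε < ε₁ →
      volume {x ∈ Ico (0 : ℝ) 1 | |g x - E * f x| / Real.sqrt (1 + E ^ 2) < ε} <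
        ENNReal.ofReal (ε ^ c) :=
  statement6_general f g hfan hgan hvnc
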